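/- For every integer a ≥ 3, the additive submonoid of ℕ generated by the set {l_a + l_n : n ∈ ℕ} is equal to the additive submonoid generated by the finite set {l_a + l_0, l_a + l_1, …, l_a + l_a}, and this finite set is a minimal system of generators: no proper subset of it generates the same submonoid. In particular, the embedding dimension of T(a) is a + 1. -/

import Mathlib

/-!
For `n = a + k + 1` the Fibonacci expansion of the Lucas recurrence gives
`l_a + l_n = (F_{k+2} + 1) • l_a + F_{k+1} • l_{a-1}`, a combination `p • l_a + q • l_{a-1}` with
`1 ≤ q < p`. Every such combination is a sum of the generators `2 l_a`, `l_a + l_{a-1}` and, when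
`p - q` is odd, of `(l_a + l_{a-2}) + (l_a + l_{a-3}) = 2 l_a + l_{a-1}`. Minimality holds because
all the generators `l_a + l_i`, `i ≤ a`, lie in `(l_a, 2 l_a]`, so none is a sum of the others.
-/

/-- The Lucas sequence: l 0 = 2, l 1 = 1, l (n+2) = l (n+1) + l n. -/
def lucas : ℕ → ℕ
  | 0 => 2
  | 1 => 1
  | n + 2 => lucas (n + 1) + lucas n

/-- The modified (monotone) Lucas sequence: l̃ 0 = 1, l̃ 1 = 2, l̃ n = l n for n ≥ 2. -/
def ltil : ℕ → ℕ
  | 0 => 1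
  | 1 => 2
  | n + 2 => lucas (n + 2)

/-- β x : minimal number of summands in a representation of x as a sum of
modified Lucas numbers (with repetitions allowed). -/
noncomputable def beta (x : ℕ) : ℕ :=
  sInf {s : ℕ | ∃ k : ℕ, ∃ b : ℕ → ℕ,
    x = ∑ i ∈ Finset.range (k + 1), b i * ltil i ∧ s = ∑ i ∈ Finset.range (k + 1), b i}

/-- γ x : the greatest k with l̃ k ≤ x (for x ≥ 1). -/
noncomputable def gamma (x : ℕ) : ℕ := sSup {k : ℕ | ltil k ≤ x}

/-- S a : the additive submonoid of ℕ generated by {l_a} ∪ {l_a + l_n : n ∈ ℕ}. -/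
def Sset (a : ℕ) : AddSubmonoid ℕ :=
  AddSubmonoid.closure ({lucas a} ∪ {x : ℕ | ∃ n : ℕ, x = lucas a + lucas n})

/-- T a : the additive submonoid of ℕ generated by {l_a + l_n : n ∈ ℕ}. -/
def Tset (a : ℕ) : AddSubmonoid ℕ :=
  AddSubmonoid.closure {x : ℕ | ∃ n : ℕ, x = lucas a + lucas n}

theorem lucas_add_two (n : ℕ) : lucas (n + 2) = lucas (n + 1) + lucas n := rfl

theorem lucas_pos : ∀ n, 0 < lucas n
  | 0 | 1 => by decide
  | n + 2 => Nat.add_pos_left (lucas_pos (n + 1)) _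

theorem lucas_succ_strictMono : StrictMono fun n => lucas (n + 1) :=
  strictMono_nat_of_lt_succ fun n => by
    simpa only [lucas_add_two] using Nat.lt_add_of_pos_right (lucas_pos n)

theorem lucas_succ_ne_two : ∀ n, lucas (n + 1) ≠ 2
  | 0 => by decide
  | n + 1 => by
    show lucas (n + 2) ≠ 2
    have : lucas 2 ≤ lucas (n + 2) := lucas_succ_strictMono.monotone (Nat.le_add_left 1 n)
    have : lucas 2 = 3 := rfl
    omega

theorem lucas_injective : Function.Injective lucas := by
  rintro (_ | m) (_ | n) h
  · rfl
  · exact absurd h.symm (lucas_succ_ne_two n)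
  · exact absurd h (lucas_succ_ne_two m)
  · exact congrArg (· + 1) (lucas_succ_strictMono.injective h)

theorem lucas_le_lucas {i a : ℕ} (ha : 2 ≤ a) (hi : i ≤ a) : lucas i ≤ lucas a := by
  obtain ⟨a, rfl⟩ := Nat.exists_eq_add_of_le' (show 1 ≤ a by omega)
  rcases i with _ | i
  · exact (lucas_succ_strictMono.monotone (show 1 ≤ a by omega)).trans' (by decide)
  · exact lucas_succ_strictMono.monotone (by omega)

theorem lucas_add (m : ℕ) :
    ∀ n, lucas (m + n + 1) = Nat.fib n * lucas m + Nat.fib (n + 1) * lucas (m + 1)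
  | 0 => by simp
  | 1 => by
    show lucas (m + 2) = _
    simp [lucas_add_two, add_comm]
  | n + 2 => by
    have h := lucas_add_two (m + n + 1)
    rw [show m + n + 1 + 1 = m + (n + 1) + 1 by ring, lucas_add m n, lucas_add m (n + 1)] at h
    rw [show m + (n + 2) + 1 = m + n + 1 + 2 by ring, h]
    simp only [Nat.fib_add_two]
    ring

theorem nsmul_add_nsmul_mem {M : Type*} [AddCommMonoid M] (S : AddSubmonoid M) {x y : M}
    (hxx : x + x ∈ S) (hxy : x + y ∈ S) (hxxy : x + x + y ∈ S) {p q : ℕ} (hq : 0 < q)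
    (hqp : q < p) : p • x + q • y ∈ S := by
  obtain ⟨q, rfl⟩ := Nat.exists_eq_add_of_le' hq
  obtain ⟨t, rfl | rfl⟩ : ∃ t, p = q + 1 + 2 * t ∨ p = q + 2 + 2 * t := by
    obtain ⟨t, ht⟩ := Nat.even_or_odd' (p - (q + 1))
    exact ⟨t, by omega⟩
  · have h : (q + 1 + 2 * t) • x + (q + 1) • y = (q + 1) • (x + y) + t • (x + x) := by
      module
    rw [h]
    exact add_mem (nsmul_mem hxy _) (nsmul_mem hxx _)
  · have h : (q + 2 + 2 * t) • x + (q + 1) • y = q • (x + y) + t • (x + x) + (x + x + y) := by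
      module
    rw [h]
    exact add_mem (add_mem (nsmul_mem hxy _) (nsmul_mem hxx _)) hxxy

theorem mem_of_mem_closure_of_lt_two_mul {Y : Set ℕ} {m x : ℕ} (hY : ∀ y ∈ Y, m ≤ y)
    (hx : x ∈ AddSubmonoid.closure Y) (hx0 : x ≠ 0) (hxm : x < 2 * m) : x ∈ Y := by
  suffices ∀ x ∈ AddSubmonoid.closure Y, x = 0 ∨ x ∈ Y ∨ 2 * m ≤ x by
    rcases this x hx with h | h | h <;> omega
  intro x hx
  induction hx using AddSubmonoid.closure_induction with
  | mem y hy => exact .inr (.inl hy)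
  | zero => exact .inl rfl
  | add u v _ _ hu hv =>
    rcases hu with rfl | hu
    · simpa using hv
    rcases hv with rfl | hv
    · simpa using .inr hu
    have hmu : m ≤ u := hu.elim (hY u) (by omega)
    have hmv : m ≤ v := hv.elim (hY v) (by omega)
    omega

theorem lucas_add_lucas_mem_closure {a : ℕ} (ha : 3 ≤ a) (n : ℕ) :
    lucas a + lucas n ∈
      AddSubmonoid.closure (((Finset.range (a + 1)).image fun i => lucas a + lucas i) : Set ℕ) := by
  set C := AddSubmonoid.closure
    (((Finset.range (a + 1)).image fun i => lucas a + lucas i : Finset ℕ) : Set ℕ)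
  have gen : ∀ i ≤ a, lucas a + lucas i ∈ C := fun i hi =>
    AddSubmonoid.subset_closure (by simpa using ⟨i, by omega, rfl⟩)
  rcases le_or_gt n a with hn | hn
  · exact gen n hn
  obtain ⟨b, rfl⟩ := Nat.exists_eq_add_of_le' ha
  obtain ⟨k, rfl⟩ : ∃ k, n = b + 2 + (k + 1) + 1 := ⟨n - b - 4, by omega⟩
  have hsplit : lucas (b + 3) + lucas (b + 2 + (k + 1) + 1) =
      (Nat.fib (k + 2) + 1) • lucas (b + 3) + Nat.fib (k + 1) • lucas (b + 2) := by
    rw [lucas_add (b + 2) (k + 1), smul_eq_mul, smul_eq_mul]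
    ring
  have hxxy : lucas (b + 3) + lucas (b + 3) + lucas (b + 2) =
      (lucas (b + 3) + lucas (b + 1)) + (lucas (b + 3) + lucas b) := by
    rw [lucas_add_two b]
    ring
  rw [hsplit]
  refine nsmul_add_nsmul_mem C (gen _ le_rfl) (gen _ (by omega)) ?_ (Nat.fib_pos.2 k.succ_pos)
    (Nat.lt_succ_of_le (Nat.fib_mono (by omega)))
  rw [hxxy]
  exact add_mem (gen _ (by omega)) (gen _ (by omega))

theorem Tset_eq_closure_range {a : ℕ} (ha : 3 ≤ a) :
    Tset a =
      AddSubmonoid.closure (((Finset.range (a + 1)).image fun i => lucas a + lucas i) : Set ℕ) := by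
  refine le_antisymm (AddSubmonoid.closure_le.2 ?_) (AddSubmonoid.closure_mono ?_)
  · rintro _ ⟨n, rfl⟩
    exact lucas_add_lucas_mem_closure ha n
  · intro x hx
    obtain ⟨i, -, rfl⟩ := by simpa using hx
    exact ⟨i, rfl⟩

theorem closure_ne_Tset_of_ssubset {a : ℕ} (ha : 3 ≤ a) {Y : Finset ℕ}
    (hY : Y ⊂ (Finset.range (a + 1)).image fun i => lucas a + lucas i) :
    AddSubmonoid.closure (Y : Set ℕ) ≠ Tset a := by
  intro hYT
  obtain ⟨g, hg, hgY⟩ := Finset.exists_of_ssubset hY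
  obtain ⟨j, hj, rfl⟩ := by simpa using hg
  have hY_ge : ∀ y ∈ (Y : Set ℕ), lucas a + 1 ≤ y := fun y hy => by
    obtain ⟨i, -, rfl⟩ := by simpa using hY.subset hy
    exact Nat.add_le_add_left (lucas_pos i) _
  refine hgY (mem_of_mem_closure_of_lt_two_mul hY_ge ?_ (by have := lucas_pos j; omega) ?_)
  · rw [hYT, Tset_eq_closure_range ha]
    exact AddSubmonoid.subset_closure hg
  · have := lucas_le_lucas (show 2 ≤ a by omega) hj
    omega

theorem minimal_generators_T (a : ℕ) (ha : 3 ≤ a) :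
    Tset a =
      AddSubmonoid.closure
        ((((Finset.range (a + 1)).image fun i => lucas a + lucas i : Finset ℕ)) : Set ℕ) ∧
    (∀ Y : Finset ℕ, Y ⊂ (Finset.range (a + 1)).image (fun i => lucas a + lucas i) →
      AddSubmonoid.closure (Y : Set ℕ) ≠ Tset a) ∧
    ((Finset.range (a + 1)).image fun i => lucas a + lucas i).card = a + 1 := by
  refine ⟨Tset_eq_closure_range ha, fun Y hY => closure_ne_Tset_of_ssubset ha hY, ?_⟩
  rw [Finset.card_image_of_injective _ fun i j h => lucas_injective (Nat.add_left_cancel h),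
    Finset.card_range]
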